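/- Let S be a non-empty set of positive integers and let G_S = F₂/⟨⟨w_j : j ∈ S⟩⟩. Then G_S is not a free group (it is not isomorphic to a free group of any rank). -/

import Mathlib

/-!
The abelianization of `G_S` has torsion, so `G_S` cannot be free: a free group has a free
abelian, hence torsion-free, abelianization. For `j ∈ S`, the relator `w_j` abelianizes to
`(a b^{51j})^50`, whereas `a b^{51j}` survives in the abelian quotient `ℤ/2` that records the
exponent sum of `a` mod 2 (every relator has `a`-exponent sum 50).
-/

/-- `a`: the first basis element of the free group `F₂ = F(a,b)`. -/
def fa : FreeGroup (Fin 2) := FreeGroup.of 0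

/-- `b`: the second basis element of the free group `F₂ = F(a,b)`. -/
def fb : FreeGroup (Fin 2) := FreeGroup.of 1

/-- The relator `w_j = a b^{2j} a b^{4j} ⋯ a b^{100j}`, i.e. the (ordered) product over
`i = 1,…,50` of the factors `a · b^{2ij}`. -/
def wrel (j : ℕ) : FreeGroup (Fin 2) :=
  ((List.range 50).map fun i => fa * fb ^ (2 * (i + 1) * j)).prod

/-- `G_S = F₂ / ⟨⟨w_j : j ∈ S⟩⟩`: the quotient of `F₂` by the normal closure of the set of
relators `w_j`, `j ∈ S`. -/
abbrev GS (S : Set ℕ) : Type :=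
  FreeGroup (Fin 2) ⧸ Subgroup.normalClosure {x | ∃ j ∈ S, x = wrel j}

instance FreeAbelianGroup.isAddTorsionFree (α : Type*) : IsAddTorsionFree (FreeAbelianGroup α) :=
  (FreeAbelianGroup.equivFinsupp α).injective.isAddTorsionFree _

instance IsFreeGroup.isMulTorsionFree_abelianization (G : Type*) [Group G] [IsFreeGroup G] :
    IsMulTorsionFree (Abelianization G) :=
  -- `FreeAbelianGroup α` is defined as `Additive (Abelianization (FreeGroup α))`.
  have : IsMulTorsionFree (Abelianization (FreeGroup (IsFreeGroup.Generators G))) :=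
    inferInstanceAs (IsMulTorsionFree (Multiplicative (FreeAbelianGroup _)))
  (IsFreeGroup.toFreeGroup G).abelianizationCongr.injective.isMulTorsionFree _

theorem map_wrel {M : Type*} [CommMonoid M] (φ : FreeGroup (Fin 2) →* M) (j : ℕ) :
    φ (wrel j) = φ (fa * fb ^ (51 * j)) ^ 50 := by
  have hsum : ∑ i ∈ Finset.range 50, 2 * (i + 1) * j = 50 * (51 * j) := by
    rw [← Finset.sum_mul, show ∑ i ∈ Finset.range 50, 2 * (i + 1) = 50 * 51 by decide, mul_assoc]
  calc φ (wrel j) = ∏ i ∈ Finset.range 50, φ fa * φ fb ^ (2 * (i + 1) * j) := by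
        rw [wrel, map_list_prod, List.map_map]
        simp only [Function.comp_def, map_mul, map_pow]
        rfl
    _ = φ (fa * fb ^ (51 * j)) ^ 50 := by
        rw [Finset.prod_mul_distrib, Finset.prod_pow_eq_pow_sum, hsum, Finset.prod_const,
          Finset.card_range, map_mul, map_pow, mul_pow, ← pow_mul, mul_comm 50]

namespace GS

theorem map_pow_fifty_eq_one {S : Set ℕ} {M : Type*} [CommMonoid M] (φ : GS S →* M)
    {j : ℕ} (hj : j ∈ S) : φ ↑(fa * fb ^ (51 * j)) ^ 50 = 1 := by
  have hw : (wrel j : GS S) = 1 :=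
    (QuotientGroup.eq_one_iff _).2 (Subgroup.subset_normalClosure ⟨j, hj, rfl⟩)
  have h := map_wrel (φ.comp (QuotientGroup.mk' _)) j
  rwa [MonoidHom.comp_apply, QuotientGroup.mk'_apply, hw, map_one, eq_comm] at h

def parity (S : Set ℕ) : GS S →* Multiplicative (ZMod 2) :=
  QuotientGroup.lift _ (FreeGroup.lift ![Multiplicative.ofAdd 1, 1]) <| by
    refine Subgroup.normalClosure_le_normal ?_
    rintro _ ⟨j, -, rfl⟩
    have hsq : ∀ z : Multiplicative (ZMod 2), z ^ 50 = 1 := by decide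
    exact MonoidHom.mem_ker.2 ((map_wrel _ j).trans (hsq _))

theorem parity_mk_fa_mul_fb_pow (S : Set ℕ) (n : ℕ) :
    parity S ↑(fa * fb ^ n) = Multiplicative.ofAdd 1 := by
  simp [parity, fa, fb]

end GS

theorem GS_not_free_general (S : Set ℕ) (hS : S.Nonempty) :
    ¬ IsFreeGroup (GS S) := by
  intro _
  obtain ⟨j, hj⟩ := hS
  let x : GS S := ↑(fa * fb ^ (51 * j))
  have hx_torsion : Abelianization.of x ^ 50 = 1 := GS.map_pow_fifty_eq_one _ hj
  have hx_trivial : Abelianization.of x = 1 :=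
    (pow_eq_one_iff_left (by norm_num)).1 hx_torsion
  have hx_parity : GS.parity S x = 1 := by
    rw [← Abelianization.lift_apply_of (GS.parity S), hx_trivial, map_one]
  exact absurd (hx_parity.symm.trans (GS.parity_mk_fa_mul_fb_pow S _)) (by decide)

/-- Let `S` be a non-empty set of positive integers and `G_S = F₂/⟨⟨w_j : j ∈ S⟩⟩`.
Then `G_S` is not a free group (not isomorphic to a free group of any rank). -/
theorem GS_not_free (S : Set ℕ) (hS : S.Nonempty) (hpos : ∀ j ∈ S, 0 < j) :
    ¬ IsFreeGroup (GS S) :=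
  GS_not_free_general S hS
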